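/- For every λ ∈ (0,1), h_λ(λθ_λ) < 1, where θ_λ = πλ/(2(1+λ)) and h_λ is the concave function satisfying h_λ(θ) = 1 − h_λ(g_λ(θ)) tan θ with h_λ(θ_λ) = 1/(1 + tan θ_λ) and h_λ'(θ_λ) = − sec²θ_λ/((1 − λ tan θ_λ)(1 + tan θ_λ)). -/

import Mathlib

/-!
Concavity puts `h` below its tangent line at `θ = π l / (2 (1 + l))`, so it suffices that the
tangent line is below `1` at `l θ`. Since `h θ = 1 / (1 + tan θ)`, this amounts to
`θ (1 - l) < tan θ (1 - l tan θ) cos² θ = sin θ cos θ - l sin² θ`; eliminating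
`l = 2θ / (π - 2θ)` and putting `x = 2θ ∈ (0, π/2)` it becomes
`x (π - 2x) < (π - x) sin x - x (1 - cos x)`, which is tight at both ends of the interval and
follows from the Taylor bounds for `sin` and `cos` at `0` and at `π/2`.
-/

open Real

theorem ConcaveOn.le_add_mul_sub_of_hasDerivAt {S : Set ℝ} {f : ℝ → ℝ} {x y f' : ℝ}
    (hf : ConcaveOn ℝ S f) (hx : x ∈ S) (hy : y ∈ S) (hxy : x < y) (hf' : HasDerivAt f f' y) :
    f x ≤ f y + f' * (x - y) := by
  have hslope := hf.le_slope_of_hasDerivAt hx hy hxy hf'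
  rw [slope_def_field, le_div_iff₀ (sub_pos.2 hxy)] at hslope
  linarith

theorem lt_pi_sub_mul_sin_sub_mul_one_sub_cos_of_le {x : ℝ} (hx0 : 0 < x) (hx : x ≤ 4 / 5) :
    x * (π - 2 * x) < (π - x) * sin x - x * (1 - cos x) := by
  have hsin := sin_gt_sub_cube hx0
  have hcos : 1 - x ^ 2 / 2 ≤ cos x := one_sub_sq_div_two_le_cos
  have hpi : π < 3.15 := pi_lt_d2
  have hpoly : x * (π - 2 * x) + x * (x ^ 2 / 2) < (π - x) * (x - x ^ 3 / 6) := by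
    have hq : 0 < 1 - x / 2 - π * x / 6 := by nlinarith
    nlinarith [mul_pos (mul_pos hx0 hx0) hq, pow_pos hx0 4]
  nlinarith [mul_lt_mul_of_pos_left hsin (by linarith [pi_gt_three] : 0 < π - x),
    mul_le_mul_of_nonneg_left hcos hx0.le]

theorem lt_pi_sub_mul_sin_sub_mul_one_sub_cos_of_ge {x : ℝ} (hx : 4 / 5 ≤ x) (hxπ : x < π / 2) :
    x * (π - 2 * x) < (π - x) * sin x - x * (1 - cos x) := by
  obtain ⟨y, hy0, rfl⟩ : ∃ y, 0 < y ∧ x = π / 2 - y := ⟨π / 2 - x, by linarith, by ring⟩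
  rw [sin_pi_div_two_sub, cos_pi_div_two_sub]
  have hcos := one_sub_sq_div_two_le_cos (x := y)
  have hsin := sin_gt_sub_cube hy0
  have hpi : π < 3.15 := pi_lt_d2
  have hpi' : 3.14 < π := pi_gt_d2
  -- the Taylor bounds at `0` for `cos y` and `sin y` leave `y` times this cubic
  have hpoly : 0 < (2 - π / 2) + y * (1 - π / 4) - y ^ 2 * (1 / 2 + π / 12) + y ^ 3 / 6 := by
    nlinarith
  nlinarith [mul_le_mul_of_nonneg_left hcos (by linarith : 0 ≤ π / 2 + y),
    mul_lt_mul_of_pos_left hsin (by linarith : 0 < π / 2 - y), mul_pos hy0 hpoly]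

theorem lt_pi_sub_mul_sin_sub_mul_one_sub_cos {x : ℝ} (hx0 : 0 < x) (hxπ : x < π / 2) :
    x * (π - 2 * x) < (π - x) * sin x - x * (1 - cos x) := by
  rcases le_total x (4 / 5) with hx | hx
  · exact lt_pi_sub_mul_sin_sub_mul_one_sub_cos_of_le hx0 hx
  · exact lt_pi_sub_mul_sin_sub_mul_one_sub_cos_of_ge hx hxπ

theorem mul_one_sub_lt_sin_mul_cos_sub_mul_sin_sq {l θ : ℝ} (hθ0 : 0 < θ) (hθ : θ < π / 4)
    (hl : l * (π - 2 * θ) = 2 * θ) :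
    θ * (1 - l) < sin θ * cos θ - l * sin θ ^ 2 := by
  have key := lt_pi_sub_mul_sin_sub_mul_one_sub_cos (x := 2 * θ) (by linarith) (by linarith)
  rw [sin_two_mul, cos_two_mul', ← sin_sq_add_cos_sq θ] at key
  refine lt_of_mul_lt_mul_left ?_ (by linarith : 0 ≤ π - 2 * θ)
  linear_combination key / 2 + (sin θ ^ 2 - θ) * hl

theorem mem_Ioo_pi_div_four_of_mem_Ioo {l : ℝ} (hl0 : 0 < l) (hl1 : l < 1) :
    π * l / (2 * (1 + l)) ∈ Set.Ioo 0 (π / 4) := by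
  refine ⟨by positivity, ?_⟩
  rw [div_lt_div_iff₀ (by positivity) (by norm_num)]
  nlinarith [pi_pos]

theorem one_div_one_add_tan_add_mul_lt_one {l θ : ℝ} (hl0 : 0 < l) (hl1 : l < 1)
    (hθ : θ = π * l / (2 * (1 + l))) :
    1 / (1 + tan θ) + (1 / cos θ ^ 2) / ((1 - l * tan θ) * (1 + tan θ)) * (θ - l * θ) < 1 := by
  obtain ⟨hθ0, hθ4⟩ : θ ∈ Set.Ioo 0 (π / 4) := hθ ▸ mem_Ioo_pi_div_four_of_mem_Ioo hl0 hl1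
  have hl : l * (π - 2 * θ) = 2 * θ := by rw [hθ]; field_simp; ring
  have hcos : 0 < cos θ := cos_pos_of_mem_Ioo ⟨by linarith, by linarith⟩
  have htan0 : 0 < tan θ := tan_pos_of_pos_of_lt_pi_div_two hθ0 (by linarith)
  have htan1 : tan θ < 1 := by
    rw [← tan_pi_div_four]
    exact tan_lt_tan_of_nonneg_of_lt_pi_div_two hθ0.le (by linarith) hθ4
  have hden : 0 < 1 - l * tan θ := by nlinarith
  have hslope : (θ - l * θ) / (cos θ ^ 2 * (1 - l * tan θ)) < tan θ := by
    have hsc : tan θ * (cos θ ^ 2 * (1 - l * tan θ)) = sin θ * cos θ - l * sin θ ^ 2 := by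
      rw [tan_eq_sin_div_cos]; field_simp
    rw [div_lt_iff₀ (by positivity), hsc]
    linarith [mul_one_sub_lt_sin_mul_cos_sub_mul_sin_sq hθ0 hθ4 hl]
  calc 1 / (1 + tan θ) + (1 / cos θ ^ 2) / ((1 - l * tan θ) * (1 + tan θ)) * (θ - l * θ)
      = (1 + (θ - l * θ) / (cos θ ^ 2 * (1 - l * tan θ))) / (1 + tan θ) := by field_simp
    _ < (1 + tan θ) / (1 + tan θ) := by gcongr
    _ = 1 := div_self (by positivity)

theorem stmt_7_general (l : ℝ) (hl0 : 0 < l) (hl1 : l < 1) (h : ℝ → ℝ)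
    (hconc : ConcaveOn ℝ (Set.Ico 0 (π / 2)) h)
    (hval : h (π * l / (2 * (1 + l))) =
      1 / (1 + Real.tan (π * l / (2 * (1 + l)))))
    (hder : HasDerivAt h
      (-((1 / Real.cos (π * l / (2 * (1 + l))) ^ 2) /
        ((1 - l * Real.tan (π * l / (2 * (1 + l)))) *
          (1 + Real.tan (π * l / (2 * (1 + l)))))))
      (π * l / (2 * (1 + l)))) :
    h (l * (π * l / (2 * (1 + l)))) < 1 := by
  set θ := π * l / (2 * (1 + l)) with hθ
  obtain ⟨hθ0, hθ4⟩ := mem_Ioo_pi_div_four_of_mem_Ioo hl0 hl1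
  have hlθ : l * θ < θ := mul_lt_of_lt_one_left hθ0 hl1
  have hmem : ∀ x, 0 < x → x ≤ θ → x ∈ Set.Ico 0 (π / 2) :=
    fun x hx hxθ => ⟨hx.le, by linarith⟩
  calc h (l * θ)
      ≤ h θ + _ * (l * θ - θ) :=
        hconc.le_add_mul_sub_of_hasDerivAt (hmem _ (by positivity) hlθ.le) (hmem θ hθ0 le_rfl)
          hlθ hder
    _ = 1 / (1 + tan θ) + (1 / cos θ ^ 2) / ((1 - l * tan θ) * (1 + tan θ)) * (θ - l * θ) := by
        rw [hval]; ring
    _ < 1 := one_div_one_add_tan_add_mul_lt_one hl0 hl1 hθ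

/-- For every `λ ∈ (0,1)`, `h_λ(λ θ_λ) < 1`, where `θ_λ = πλ/(2(1+λ))` and `h_λ` is
the concave function satisfying the functional equation
`h(θ) = 1 − h(g_λ θ) tan θ`, with `h(θ_λ) = 1/(1 + tan θ_λ)` and
`h'(θ_λ) = − sec² θ_λ / ((1 − λ tan θ_λ)(1 + tan θ_λ))`. -/
theorem stmt_7 (l : ℝ) (hl0 : 0 < l) (hl1 : l < 1) (h : ℝ → ℝ)
    (hconc : ConcaveOn ℝ (Set.Ico 0 (π / 2)) h)
    (hfe : ∀ θ ∈ Set.Ico 0 (π / 2),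
      h θ = 1 - h (l * (π / 2 - θ)) * Real.tan θ)
    (hval : h (π * l / (2 * (1 + l))) =
      1 / (1 + Real.tan (π * l / (2 * (1 + l)))))
    (hder : HasDerivAt h
      (-((1 / Real.cos (π * l / (2 * (1 + l))) ^ 2) /
        ((1 - l * Real.tan (π * l / (2 * (1 + l)))) *
          (1 + Real.tan (π * l / (2 * (1 + l)))))))
      (π * l / (2 * (1 + l)))) :
    h (l * (π * l / (2 * (1 + l)))) < 1 :=
  stmt_7_general l hl0 hl1 h hconc hval hder
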